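/- There is no n ∈ ℕ with h_n > 0, h_{n+1} > 0, and h_{n+2} > 0. -/

import Mathlib

/-!
The even-indexed terms `e k = h (2 * k)` satisfy the second-order recurrence
`e (k + 2) = e (k + 1) - t (k + 2) * t (k + 1) * e k`. Since the Thue–Morse sequence has no
three equal consecutive terms, the coefficient `t (k + 2) * t (k + 1)` is never `1` twice in a
row; this keeps every `e k` with `k ≥ 1` negative. For `n ≥ 1` one of `h n`, `h (n + 1)` is
such a term, and `h 0 = 0`.
-/

def t (n : ℕ) : ℤ := (-1) ^ ((Nat.digits 2 n).sum)

def h : ℕ → ℤ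
  | 0 => 0
  | 1 => 1
  | (n + 2) => t (n + 2) * h (n + 1) + h n

theorem neg_of_recurrence {e s : ℕ → ℤ} (hs : ∀ n, s n = 1 ∨ s n = -1)
    (hss : ∀ n, s (n + 1) = 1 → s n = -1) (he : ∀ n, e (n + 2) = e (n + 1) - s (n + 1) * e n)
    (h0 : e 0 < 0) (h1 : e 1 < 0) (h01 : s 1 = 1 → e 1 < e 0) (n : ℕ) : e n < 0 := by
  -- A coefficient `s (n + 1) = 1` follows `s n = -1`, i.e. a step `e (n + 1) = e n + e (n - 1)`.
  suffices key : ∀ n, e n < 0 ∧ e (n + 1) < 0 ∧ (s (n + 1) = 1 → e (n + 1) < e n) from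
    (key n).1
  intro n
  induction n with
  | zero => exact ⟨h0, h1, h01⟩
  | succ n ih =>
    obtain ⟨hn, hn1, hdec⟩ := ih
    have hn2 : e (n + 2) < 0 := by
      rcases hs (n + 1) with hs1 | hs1
      · rw [he, hs1]; linarith [hdec hs1]
      · rw [he, hs1]; linarith
    refine ⟨hn1, hn2, fun hs2 => ?_⟩
    rw [he, hss _ hs2]
    linarith

theorem t_eq_one_or_eq_neg_one (n : ℕ) : t n = 1 ∨ t n = -1 :=
  neg_one_pow_eq_or ℤ _

theorem t_mul_self (n : ℕ) : t n * t n = 1 := by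
  rcases t_eq_one_or_eq_neg_one n with ht | ht <;> simp [ht]

theorem t_two_mul (n : ℕ) : t (2 * n) = t n := by
  rcases Nat.eq_zero_or_pos n with rfl | hn
  · rfl
  · unfold t
    rw [Nat.digits_def' (by norm_num) (by omega)]
    simp

theorem t_two_mul_add_one (n : ℕ) : t (2 * n + 1) = -t n := by
  unfold t
  rw [Nat.digits_def' (by norm_num) (by omega), show (2 * n + 1) / 2 = n by omega]
  simp [pow_add]

theorem t_ne_neg_self (n : ℕ) : t n ≠ -t n := by
  rw [Ne, self_eq_neg]
  exact pow_ne_zero _ (by norm_num)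

theorem not_t_eq_t_succ_eq_t_succ_succ (n : ℕ) :
    ¬ (t n = t (n + 1) ∧ t (n + 1) = t (n + 2)) := by
  rintro ⟨h01, h12⟩
  rcases Nat.even_or_odd' n with ⟨k, rfl | rfl⟩
  · rw [t_two_mul, t_two_mul_add_one] at h01
    exact t_ne_neg_self k h01
  · rw [show 2 * k + 1 + 1 = 2 * (k + 1) by ring, show 2 * k + 1 + 2 = 2 * (k + 1) + 1 by ring,
      t_two_mul, t_two_mul_add_one] at h12
    exact t_ne_neg_self (k + 1) h12

theorem t_mul_eq_one_or_eq_neg_one (m n : ℕ) : t m * t n = 1 ∨ t m * t n = -1 := by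
  unfold t
  rw [← pow_add]
  exact neg_one_pow_eq_or ℤ _

theorem t_mul_eq_neg_one_of_t_succ_mul_eq_one (n : ℕ) (hn : t (n + 3) * t (n + 2) = 1) :
    t (n + 2) * t (n + 1) = -1 := by
  have := not_t_eq_t_succ_eq_t_succ_succ (n + 1)
  rcases t_eq_one_or_eq_neg_one (n + 1) with h1 | h1 <;>
    rcases t_eq_one_or_eq_neg_one (n + 2) with h2 | h2 <;>
    rcases t_eq_one_or_eq_neg_one (n + 3) with h3 | h3 <;>
    simp_all

theorem h_two_mul_add_three (n : ℕ) : h (2 * n + 3) = -t (n + 1) * h (2 * n) := by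
  have h2n2 : h (2 * n + 2) = t (n + 1) * h (2 * n + 1) + h (2 * n) := by
    rw [h, show 2 * n + 2 = 2 * (n + 1) by ring, t_two_mul]
  rw [h, show 2 * n + 1 + 2 = 2 * (n + 1) + 1 by ring, t_two_mul_add_one, h2n2]
  linear_combination (-h (2 * n + 1)) * t_mul_self (n + 1)

theorem h_two_mul_add_four (n : ℕ) :
    h (2 * n + 4) = h (2 * n + 2) - t (n + 2) * t (n + 1) * h (2 * n) := by
  rw [h, show 2 * n + 2 + 2 = 2 * (n + 2) by ring, t_two_mul, h_two_mul_add_three]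
  ring

theorem h_two_mul_neg {k : ℕ} (hk : 0 < k) : h (2 * k) < 0 := by
  obtain ⟨n, rfl⟩ : ∃ n, k = n + 1 := ⟨k - 1, by omega⟩
  refine neg_of_recurrence (e := fun n => h (2 * n + 2)) (s := fun n => t (n + 2) * t (n + 1))
    (fun n => t_mul_eq_one_or_eq_neg_one _ _) t_mul_eq_neg_one_of_t_succ_mul_eq_one
    (fun n => h_two_mul_add_four (n + 1)) (by decide) (by decide) (by decide) n

theorem stmt7 : ¬ ∃ n : ℕ, 0 < h n ∧ 0 < h (n + 1) ∧ 0 < h (n + 2) := by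
  rintro ⟨n, hn, hn1, -⟩
  obtain rfl | hpos := n.eq_zero_or_pos
  · exact lt_irrefl 0 hn
  obtain ⟨k, rfl | rfl⟩ := Nat.even_or_odd' n
  · exact (h_two_mul_neg (by omega)).not_gt hn
  · exact (h_two_mul_neg (k := k + 1) (by omega)).not_gt hn1
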